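/- Funk balls are scaled copies of Ω: for a bounded polytope Ω, p ∈ int(Ω), and r ≥ 0, the Funk ball B_F(p,r) equals the image of Ω under the homothety centered at p with ratio (1 − e^{−r}), i.e., B_F(p,r) = { p + (1 − e^{−r})(x − p) : x ∈ Ω }. -/

import Mathlib

open Matrix

/-!
Each `aᵢ(x) = wᵢ ⬝ x + cᵢ` is affine, so on the homothety `h(x) = p + t • (x - p)` it satisfies
`aᵢ (h x) = (1 - t) aᵢ(p) + t aᵢ(x)`. With `t = 1 - e^{-r}`, the Funk condition
`log (aᵢ(p) / aᵢ(q)) ≤ r` reads `e^{-r} aᵢ(p) ≤ aᵢ(q)`, which for `q = h x` is `t aᵢ(x) ≥ 0`,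
i.e. `x ∈ Ω` when `t > 0`. For `r = 0` the Funk ball is `{q | aᵢ(p) ≤ aᵢ(q) ∀ i}`, and this is
`{p}` because otherwise `Ω` would contain the ray from `p` through `q`, contradicting boundedness.
-/

open AffineMap Bornology Real

theorem eq_of_isBounded_of_forall_lineMap_mem {V P : Type*} [SeminormedAddCommGroup V]
    [NormedSpace ℝ V] [MetricSpace P] [NormedAddTorsor V P] {S : Set P} (hS : IsBounded S)
    {p q : P} (hray : ∀ s : ℝ, 0 ≤ s → lineMap p q s ∈ S) : p = q := by
  obtain ⟨C, hC⟩ := (Metric.isBounded_iff_subset_closedBall p).1 hS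
  by_contra hpq
  have hdist : 0 < dist p q := dist_pos.2 hpq
  set s := (|C| + 1) / dist p q
  have hs : 0 ≤ s := by positivity
  have hle : dist (lineMap p q s) p ≤ C := hC (hray s hs)
  rw [dist_lineMap_left, Real.norm_of_nonneg hs, div_mul_cancel₀ _ hdist.ne'] at hle
  linarith [le_abs_self C]

section Homothety

variable {ι k E : Type*} [AddCommGroup E]

theorem apply_homothety_eq [Field k] [Module k E] (f : E →ᵃ[k] k) (p x : E) (t : k) :
    f (homothety p t x) = (1 - t) * f p + t * f x := by
  rw [homothety_eq_lineMap, apply_lineMap, lineMap_apply_module, smul_eq_mul, smul_eq_mul]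

theorem image_homothety_setOf_forall_nonneg [Field k] [LinearOrder k] [IsStrictOrderedRing k]
    [Module k E] (a : ι → E →ᵃ[k] k) (p : E) {t : k} (ht : 0 < t) :
    homothety p t '' {x | ∀ i, 0 ≤ a i x} = {q | ∀ i, (1 - t) * a i p ≤ a i q} := by
  have hshift : ∀ i x, (1 - t) * a i p ≤ a i (homothety p t x) ↔ 0 ≤ a i x := fun i x => by
    rw [apply_homothety_eq, le_add_iff_nonneg_right, mul_nonneg_iff_of_pos_left ht]
  ext q
  constructor
  · rintro ⟨x, hx, rfl⟩ i
    exact (hshift i x).2 (hx i)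
  · intro hq
    have hinv : homothety p t (homothety p t⁻¹ q) = q := by
      rw [← homothety_mul_apply, mul_inv_cancel₀ ht.ne', homothety_one, id_apply]
    refine ⟨homothety p t⁻¹ q, fun i => (hshift i _).1 ?_, hinv⟩
    rw [hinv]
    exact hq i

end Homothety

section Bounded

variable {ι E : Type*} [NormedAddCommGroup E] [NormedSpace ℝ E]

theorem setOf_forall_le_eq_singleton (a : ι → E →ᵃ[ℝ] ℝ) (hbdd : IsBounded {x | ∀ i, 0 ≤ a i x}) {p : E}
    (hp : ∀ i, 0 ≤ a i p) : {q | ∀ i, a i p ≤ a i q} = {p} := by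
  refine Set.Subset.antisymm (fun q hq => ?_) (by simp)
  refine (eq_of_isBounded_of_forall_lineMap_mem hbdd fun s hs i => ?_).symm
  rw [apply_lineMap, lineMap_apply_module', smul_eq_mul]
  nlinarith [hp i, hq i]

theorem image_homothety_setOf_forall_nonneg_of_isBounded (a : ι → E →ᵃ[ℝ] ℝ)
    (hbdd : IsBounded {x | ∀ i, 0 ≤ a i x}) {p : E} (hp : ∀ i, 0 ≤ a i p) {t : ℝ} (ht : 0 ≤ t) :
    homothety p t '' {x | ∀ i, 0 ≤ a i x} = {q | ∀ i, (1 - t) * a i p ≤ a i q} := by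
  rcases ht.eq_or_lt with rfl | ht
  · simp only [homothety_zero, coe_const, sub_zero, one_mul]
    rw [setOf_forall_le_eq_singleton a hbdd hp]
    exact Set.Nonempty.image_const (s := {x | ∀ i, 0 ≤ a i x}) ⟨p, hp⟩ p
  · exact image_homothety_setOf_forall_nonneg a p ht

end Bounded

theorem log_div_le_iff_exp_neg_mul_le {a b r : ℝ} (ha : 0 < a) (hb : 0 < b) :
    log (a / b) ≤ r ↔ exp (-r) * a ≤ b := by
  rw [log_le_iff_le_exp (div_pos ha hb), div_le_iff₀ hb, exp_neg, inv_mul_le_iff₀ (exp_pos r),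
    mul_comm]

theorem forall_pos_and_sup'_log_div_le_iff {ι : Type*} [Fintype ι]
    (hι : (Finset.univ : Finset ι).Nonempty) {a b : ι → ℝ} (ha : ∀ i, 0 < a i) (r : ℝ) :
    ((∀ i, 0 < b i) ∧ Finset.univ.sup' hι (fun i => log (a i / b i)) ≤ r) ↔
      ∀ i, exp (-r) * a i ≤ b i := by
  simp only [Finset.sup'_le_iff, Finset.mem_univ, true_imp_iff]
  constructor
  · rintro ⟨hb, hlog⟩ i
    exact (log_div_le_iff_exp_neg_mul_le (ha i) (hb i)).1 (hlog i)
  · intro h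
    have hb : ∀ i, 0 < b i := fun i => (mul_pos (exp_pos _) (ha i)).trans_le (h i)
    exact ⟨hb, fun i => (log_div_le_iff_exp_neg_mul_le (ha i) (hb i)).2 (h i)⟩

def dotProductAddConst {n : Type*} [Fintype n] (w : n → ℝ) (c : ℝ) : (n → ℝ) →ᵃ[ℝ] ℝ where
  toFun x := w ⬝ᵥ x + c
  linear := dotProductBilin ℝ ℝ w
  map_vadd' x v := by
    simp only [vadd_eq_add, dotProduct_add, dotProductBilin_apply_apply]
    ring

/-- Funk balls are scaled copies of `Ω`: for a bounded polytope
`Ω = ⋂ᵢ {x : wᵢ ⬝ x + cᵢ ≥ 0}`, `p ∈ int Ω` and `r ≥ 0`, the Funk ball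
`B_F(p,r) = { q : maxᵢ log((wᵢ⬝p+cᵢ)/(wᵢ⬝q+cᵢ)) ≤ r }` equals the image of `Ω` under the
homothety centered at `p` with ratio `1 − e^{−r}`. -/
theorem funk_ball_homothety {d m : ℕ} (hm : 0 < m)
    (w : Fin m → Fin d → ℝ) (c : Fin m → ℝ)
    (Ω : Set (Fin d → ℝ)) (hΩ : Ω = {x | ∀ i, 0 ≤ w i ⬝ᵥ x + c i})
    (hbdd : Bornology.IsBounded Ω)
    (hint : interior Ω = {x | ∀ i, 0 < w i ⬝ᵥ x + c i})
    (p : Fin d → ℝ) (hp : p ∈ interior Ω) (r : ℝ) (hr : 0 ≤ r) :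
    {q ∈ interior Ω |
        Finset.univ.sup' (Finset.univ_nonempty_iff.mpr ⟨⟨0, hm⟩⟩)
          (fun i => Real.log ((w i ⬝ᵥ p + c i) / (w i ⬝ᵥ q + c i))) ≤ r} =
      (fun x => p + (1 - Real.exp (-r)) • (x - p)) '' Ω := by
  let a : Fin m → (Fin d → ℝ) →ᵃ[ℝ] ℝ := fun i => dotProductAddConst (w i) (c i)
  rw [hint] at hp
  have ht : 0 ≤ 1 - exp (-r) := sub_nonneg.2 (exp_le_one_iff.2 (neg_nonpos.2 hr))
  have hhom : (fun x => p + (1 - exp (-r)) • (x - p)) = homothety p (1 - exp (-r)) := by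
    ext x
    rw [homothety_apply, vsub_eq_sub, vadd_eq_add, add_comm]
  rw [hΩ] at hbdd
  rw [hint, hhom, hΩ]
  refine (Set.ext fun q => ?_).trans
    (image_homothety_setOf_forall_nonneg_of_isBounded a hbdd (fun i => (hp i).le) ht).symm
  rw [sub_sub_cancel]
  exact forall_pos_and_sup'_log_div_le_iff _ hp r
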